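/- arXiv:1403.2195 — 2 statements merged into one kernel-verified Lean document; each statement's English description precedes it below -/
import Mathlib

section
/- For n = 2^k with k ∈ ℕ, any a > 0, and any y > 0, the L_n-transform of x ↦ exp(−a x^{2n}) satisfies ∫₀^∞ x^{n−1} exp(−x^n y^n) exp(−a x^{2n}) dx = (√π/(2 n √a)) · exp(y^{2n}/(4a)) · erfc(y^n/(2√a)), where erfc(t) = (2/√π) ∫_t^∞ exp(−u²) du. -/
/-!
Substituting `t = xⁿ` turns the transform into `(1/n) ∫₀^∞ exp(-yⁿ t - a t²) dt`. Completing the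
square, `yⁿ t + a t² = (√a t + yⁿ/(2√a))² - y²ⁿ/(4a)`, and the affine substitution
`u = √a t + yⁿ/(2√a)` leaves the Gaussian tail `∫_{yⁿ/(2√a)}^∞ exp(-u²) du`, which is `erfc` up to
the factor `√π/2`.
-/

open MeasureTheory Set

/-- The complementary error function `erfc(t) = (2/√π) ∫_t^∞ exp(-u²) du`. -/
noncomputable def erfc (t : ℝ) : ℝ :=
  (2 / Real.sqrt Real.pi) * ∫ u in Ioi t, Real.exp (-u ^ 2)

open Real

section ChangeOfVariables

variable {E : Type*} [NormedAddCommGroup E] [NormedSpace ℝ E]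

theorem integral_comp_add_right_Ioi (g : ℝ → E) (a c : ℝ) :
    ∫ x in Ioi a, g (x + c) = ∫ x in Ioi (a + c), g x := by
  rw [← integral_indicator measurableSet_Ioi, ← integral_indicator measurableSet_Ioi,
    ← integral_add_right_eq_self (fun x => (Ioi (a + c)).indicator g x) c]
  congr 1
  ext x
  simp only [indicator_apply, mem_Ioi, add_lt_add_iff_right]

theorem integral_comp_mul_add_Ioi (g : ℝ → E) (a c : ℝ) {b : ℝ} (hb : 0 < b) :
    ∫ x in Ioi a, g (b * x + c) = b⁻¹ • ∫ x in Ioi (b * a + c), g x := by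
  rw [integral_comp_mul_left_Ioi (fun x => g (x + c)) a hb, integral_comp_add_right_Ioi]

theorem integral_pow_sub_one_smul_comp_pow_Ioi (g : ℝ → E) {n : ℕ} (hn : 0 < n) :
    ∫ x in Ioi 0, x ^ (n - 1) • g (x ^ n) = (n : ℝ)⁻¹ • ∫ t in Ioi 0, g t := by
  have hnR : (0 : ℝ) < n := Nat.cast_pos.mpr hn
  rw [← integral_comp_rpow_Ioi_of_pos (g := g) hnR, ← integral_smul]
  refine setIntegral_congr_fun measurableSet_Ioi fun x _ => ?_
  rw [smul_smul, ← Nat.cast_pred hn, rpow_natCast, rpow_natCast,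
    inv_mul_cancel_left₀ hnR.ne']

end ChangeOfVariables

theorem exp_neg_mul_sub_mul_sq_eq (a b t : ℝ) (ha : 0 < a) :
    exp (-(b * t) - a * t ^ 2) = exp (b ^ 2 / (4 * a)) * exp (-(√a * t + b / (2 * √a)) ^ 2) := by
  obtain ⟨s, hs, rfl⟩ : ∃ s : ℝ, 0 < s ∧ s ^ 2 = a := ⟨√a, sqrt_pos.mpr ha, sq_sqrt ha.le⟩
  rw [sqrt_sq hs.le, ← exp_add]
  congr 1
  field_simp
  ring

theorem integral_exp_neg_mul_sub_mul_sq_Ioi {a : ℝ} (ha : 0 < a) (b : ℝ) :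
    ∫ t in Ioi 0, exp (-(b * t) - a * t ^ 2)
      = √π / (2 * √a) * exp (b ^ 2 / (4 * a)) * erfc (b / (2 * √a)) := by
  have hsa : 0 < √a := sqrt_pos.mpr ha
  simp_rw [exp_neg_mul_sub_mul_sq_eq a b _ ha]
  rw [integral_const_mul,
    integral_comp_mul_add_Ioi (fun u => exp (-u ^ 2)) 0 (b / (2 * √a)) hsa, mul_zero, zero_add,
    erfc, smul_eq_mul]
  have hsπ : 0 < √π := sqrt_pos.mpr pi_pos
  field_simp

theorem Ln_gaussian_general (k n : ℕ) (hn : n = 2 ^ k) (a y : ℝ) (ha : 0 < a) :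
    ∫ x in Ioi (0 : ℝ), x ^ (n - 1) * Real.exp (-(x ^ n * y ^ n)) * Real.exp (-(a * x ^ (2 * n)))
      = (Real.sqrt Real.pi / (2 * n * Real.sqrt a)) * Real.exp (y ^ (2 * n) / (4 * a)) *
          erfc (y ^ n / (2 * Real.sqrt a)) := by
  have hn0 : 0 < n := hn ▸ Nat.two_pow_pos k
  have integrand (x : ℝ) : x ^ (n - 1) * exp (-(x ^ n * y ^ n)) * exp (-(a * x ^ (2 * n)))
      = x ^ (n - 1) • exp (-(y ^ n * x ^ n) - a * (x ^ n) ^ 2) := by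
    rw [smul_eq_mul, mul_assoc, ← exp_add, ← pow_mul, mul_comm n 2]
    ring_nf
  simp_rw [integrand]
  rw [integral_pow_sub_one_smul_comp_pow_Ioi (fun t => exp (-(y ^ n * t) - a * t ^ 2)) hn0,
    integral_exp_neg_mul_sub_mul_sq_Ioi ha, smul_eq_mul, ← pow_mul, mul_comm n 2]
  field_simp

/-- For `n = 2^k`, `a > 0` and `y > 0`,
`Lₙ{exp(-a x^{2n}); y} = (√π/(2 n √a)) exp(y^{2n}/(4a)) erfc(yⁿ/(2√a))`. -/
theorem Ln_gaussian (k n : ℕ) (hn : n = 2 ^ k) (a y : ℝ) (ha : 0 < a) (hy : 0 < y) :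
    ∫ x in Ioi (0 : ℝ), x ^ (n - 1) * Real.exp (-(x ^ n * y ^ n)) * Real.exp (-(a * x ^ (2 * n)))
      = (Real.sqrt Real.pi / (2 * n * Real.sqrt a)) * Real.exp (y ^ (2 * n) / (4 * a)) *
          erfc (y ^ n / (2 * Real.sqrt a)) :=
  Ln_gaussian_general k n hn a y ha
end

section
/- (Theorem 2.1) For n = 2^k with k ∈ ℕ and a positive integer K ≥ 1, let f : [0,∞) → ℝ and suppose that the iterated δ̄-derivatives δ̄⁰f = f, δ̄f, …, δ̄^{K−1}f are all continuous on [0,∞) and differentiable on (0,∞), that each δ̄^j f (0 ≤ j ≤ K) is of exponential order exp(α^n x^n) as x → ∞ for some α > 0, and that for y > α each function x ↦ x^{n−1} exp(−y^n x^n) (δ̄^j f)(x), 0 ≤ j ≤ K, is integrable on (0,∞). Then for every y > α: L_n{δ̄^K f; y} = (n y^n)^K L_n{f; y} − ∑_{j=0}^{K−1} (n y^n)^{K−1−j} (δ̄^j f)(0). -/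
/-!
Integration by parts against `exp (-(xⁿ yⁿ))`, whose derivative is `-n yⁿ xⁿ⁻¹ exp (-(xⁿ yⁿ))`,
gives the one-step rule `Lₙ{δ̄g; y} = n yⁿ Lₙ{g; y} - g 0`: the factor `xⁿ⁻¹` of the kernel
cancels the `1 / xⁿ⁻¹` of `δ̄`, and the boundary term at infinity vanishes because `g` grows at
most like `exp (αⁿ xⁿ)` with `αⁿ < yⁿ`. Iterating this linear recurrence `K` times gives the formula.
-/

open MeasureTheory Set Filter

noncomputable def deltaBar (n : ℕ) (f : ℝ → ℝ) : ℝ → ℝ :=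
  fun x => deriv f x / x ^ (n - 1)

noncomputable def lnTransform (n : ℕ) (f : ℝ → ℝ) (y : ℝ) : ℝ :=
  ∫ x in Ioi (0 : ℝ), x ^ (n - 1) * Real.exp (-(x ^ n * y ^ n)) * f x

theorem eq_pow_mul_sub_sum_of_forall_succ_eq {R : Type*} [CommRing R] (c : R) (u a : ℕ → R)
    (K : ℕ) (h : ∀ j < K, u (j + 1) = c * u j - a j) :
    u K = c ^ K * u 0 - ∑ j ∈ Finset.range K, c ^ (K - 1 - j) * a j := by
  induction K with
  | zero => simp
  | succ K ih =>
    have hpow : ∀ j ∈ Finset.range K, c ^ (K + 1 - 1 - j) * a j = c * (c ^ (K - 1 - j) * a j) := by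
      intro j hj
      rw [show K + 1 - 1 - j = K - 1 - j + 1 by have := Finset.mem_range.mp hj; omega, pow_succ']
      ring
    rw [h K K.lt_succ_self, ih fun j hj => h j (hj.trans K.lt_succ_self), Finset.sum_range_succ,
      Finset.sum_congr rfl hpow, ← Finset.mul_sum, Nat.add_sub_cancel, Nat.sub_self]
    ring

section

variable {n : ℕ} {g : ℝ → ℝ} {α M y : ℝ}

theorem hasDerivAt_exp_neg_pow_mul_mul (y : ℝ) {x : ℝ} (hx : x ≠ 0) (hg : DifferentiableAt ℝ g x) :
    HasDerivAt (fun x => Real.exp (-(x ^ n * y ^ n)) * g x)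
      (x ^ (n - 1) * Real.exp (-(x ^ n * y ^ n)) * deltaBar n g x
        - n * y ^ n * (x ^ (n - 1) * Real.exp (-(x ^ n * y ^ n)) * g x)) x := by
  have hexp : HasDerivAt (fun x => Real.exp (-(x ^ n * y ^ n)))
      (Real.exp (-(x ^ n * y ^ n)) * -(n * x ^ (n - 1) * y ^ n)) x :=
    ((hasDerivAt_pow n x).mul_const (y ^ n)).neg.exp
  refine (hexp.mul hg.hasDerivAt).congr_deriv ?_
  rw [deltaBar]
  field_simp [pow_ne_zero (n - 1) hx]
  ring

theorem tendsto_exp_neg_pow_mul_mul_atTop (hn : n ≠ 0) (hα : 0 ≤ α) (hy : α < y)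
    (hord : ∀ᶠ x in atTop, |g x| ≤ M * Real.exp (α ^ n * x ^ n)) :
    Tendsto (fun x => Real.exp (-(x ^ n * y ^ n)) * g x) atTop (nhds 0) := by
  have hbound : ∀ᶠ x in atTop,
      ‖Real.exp (-(x ^ n * y ^ n)) * g x‖ ≤ M * Real.exp ((α ^ n - y ^ n) * x ^ n) := by
    filter_upwards [hord] with x hx
    calc ‖Real.exp (-(x ^ n * y ^ n)) * g x‖ = Real.exp (-(x ^ n * y ^ n)) * |g x| := by
          rw [Real.norm_eq_abs, abs_mul, abs_of_pos (Real.exp_pos _)]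
      _ ≤ Real.exp (-(x ^ n * y ^ n)) * (M * Real.exp (α ^ n * x ^ n)) := by gcongr
      _ = M * Real.exp ((α ^ n - y ^ n) * x ^ n) := by
          rw [mul_left_comm, ← Real.exp_add]
          ring_nf
  have hneg : α ^ n - y ^ n < 0 := sub_neg.mpr (pow_lt_pow_left₀ hy hα hn)
  have hdecay : Tendsto (fun x : ℝ => M * Real.exp ((α ^ n - y ^ n) * x ^ n)) atTop (nhds 0) := by
    simpa using (Real.tendsto_exp_atBot.comp
      ((tendsto_pow_atTop hn).const_mul_atTop_of_neg hneg)).const_mul M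
  exact squeeze_zero_norm' hbound hdecay

theorem integrableOn_kernel_mul_iff_comm {f : ℝ → ℝ} :
    IntegrableOn (fun x : ℝ => x ^ (n - 1) * Real.exp (-(y ^ n * x ^ n)) * f x) (Ioi 0) ↔
      IntegrableOn (fun x : ℝ => x ^ (n - 1) * Real.exp (-(x ^ n * y ^ n)) * f x) (Ioi 0) := by
  simp only [mul_comm (y ^ n)]

theorem lnTransform_deltaBar (hn : n ≠ 0) (hα : 0 ≤ α) (hy : α < y)
    (hc : ContinuousWithinAt g (Ici 0) 0) (hd : DifferentiableOn ℝ g (Ioi 0))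
    (hord : ∀ᶠ x in atTop, |g x| ≤ M * Real.exp (α ^ n * x ^ n))
    (hint : IntegrableOn (fun x : ℝ => x ^ (n - 1) * Real.exp (-(y ^ n * x ^ n)) * g x) (Ioi 0))
    (hint' : IntegrableOn
      (fun x : ℝ => x ^ (n - 1) * Real.exp (-(y ^ n * x ^ n)) * deltaBar n g x) (Ioi 0)) :
    lnTransform n (deltaBar n g) y = n * y ^ n * lnTransform n g y - g 0 := by
  rw [integrableOn_kernel_mul_iff_comm] at hint hint'
  have hcont : ContinuousWithinAt (fun x => Real.exp (-(x ^ n * y ^ n)) * g x) (Ici 0) 0 :=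
    (Continuous.continuousWithinAt (by fun_prop)).mul hc
  have hderiv : ∀ x ∈ Ioi (0 : ℝ), HasDerivAt (fun x => Real.exp (-(x ^ n * y ^ n)) * g x)
      (x ^ (n - 1) * Real.exp (-(x ^ n * y ^ n)) * deltaBar n g x
        - n * y ^ n * (x ^ (n - 1) * Real.exp (-(x ^ n * y ^ n)) * g x)) x := fun x hx =>
    hasDerivAt_exp_neg_pow_mul_mul y (ne_of_gt hx) (hd.differentiableAt (Ioi_mem_nhds hx))
  have hparts := integral_Ioi_of_hasDerivAt_of_tendsto hcont hderiv
    (hint'.sub (hint.const_mul _)) (tendsto_exp_neg_pow_mul_mul_atTop hn hα hy hord)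
  rw [integral_sub hint' (hint.const_mul _), integral_const_mul] at hparts
  simp only [zero_pow hn, zero_mul, neg_zero, Real.exp_zero, one_mul] at hparts
  unfold lnTransform
  linarith

end

theorem Ln_deltaBar_iterate_general (k n K : ℕ) (hn : n = 2 ^ k)
    (f : ℝ → ℝ) (α M : ℝ) (hα : 0 < α)
    (hc : ∀ j < K, ContinuousOn ((deltaBar n)^[j] f) (Ici 0))
    (hd : ∀ j < K, DifferentiableOn ℝ ((deltaBar n)^[j] f) (Ioi 0))
    (hord : ∀ j ≤ K, ∀ᶠ x in atTop, |((deltaBar n)^[j] f) x| ≤ M * Real.exp (α ^ n * x ^ n))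
    (hint : ∀ j ≤ K, ∀ y : ℝ, α < y →
      IntegrableOn
        (fun x : ℝ => x ^ (n - 1) * Real.exp (-(y ^ n * x ^ n)) * ((deltaBar n)^[j] f) x)
        (Ioi 0)) :
    ∀ y : ℝ, α < y →
      ∫ x in Ioi (0 : ℝ), x ^ (n - 1) * Real.exp (-(x ^ n * y ^ n)) * ((deltaBar n)^[K] f) x
        = (n * y ^ n) ^ K *
            (∫ x in Ioi (0 : ℝ), x ^ (n - 1) * Real.exp (-(x ^ n * y ^ n)) * f x)
          - ∑ j ∈ Finset.range K, (n * y ^ n) ^ (K - 1 - j) * ((deltaBar n)^[j] f) 0 := by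
  intro y hy
  have hn0 : n ≠ 0 := hn ▸ (Nat.two_pow_pos k).ne'
  refine eq_pow_mul_sub_sum_of_forall_succ_eq _ (fun j => lnTransform n ((deltaBar n)^[j] f) y)
    _ K fun j hj => ?_
  rw [Function.iterate_succ_apply']
  exact lnTransform_deltaBar hn0 hα.le hy ((hc j hj).continuousWithinAt self_mem_Ici) (hd j hj)
    (hord j hj.le) (hint j hj.le y hy)
    (Function.iterate_succ_apply' (deltaBar n) j f ▸ hint (j + 1) hj y hy)

/-- Theorem 2.1: for `n = 2^k` and `K ≥ 1`, if the iterated `δ̄`-derivatives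
`δ̄⁰f = f, δ̄f, …, δ̄^{K-1}f` are continuous on `[0,∞)` and differentiable on `(0,∞)`,
each `δ̄ʲf` (`0 ≤ j ≤ K`) is of exponential order `exp(αⁿ xⁿ)` for some `α > 0`, and each
`x ↦ x^{n-1} exp(-yⁿ xⁿ) (δ̄ʲf)(x)` is integrable on `(0,∞)` for `y > α`, then for `y > α`:
`Lₙ{δ̄ᴷ f; y} = (n yⁿ)ᴷ Lₙ{f; y} - ∑_{j=0}^{K-1} (n yⁿ)^{K-1-j} (δ̄ʲf)(0)`. -/
theorem Ln_deltaBar_iterate (k n K : ℕ) (hn : n = 2 ^ k) (hK : 1 ≤ K)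
    (f : ℝ → ℝ) (α M : ℝ) (hα : 0 < α) (hM : 0 < M)
    (hc : ∀ j < K, ContinuousOn ((deltaBar n)^[j] f) (Ici 0))
    (hd : ∀ j < K, DifferentiableOn ℝ ((deltaBar n)^[j] f) (Ioi 0))
    (hord : ∀ j ≤ K, ∀ᶠ x in atTop, |((deltaBar n)^[j] f) x| ≤ M * Real.exp (α ^ n * x ^ n))
    (hint : ∀ j ≤ K, ∀ y : ℝ, α < y →
      IntegrableOn
        (fun x : ℝ => x ^ (n - 1) * Real.exp (-(y ^ n * x ^ n)) * ((deltaBar n)^[j] f) x)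
        (Ioi 0)) :
    ∀ y : ℝ, α < y →
      ∫ x in Ioi (0 : ℝ), x ^ (n - 1) * Real.exp (-(x ^ n * y ^ n)) * ((deltaBar n)^[K] f) x
        = (n * y ^ n) ^ K *
            (∫ x in Ioi (0 : ℝ), x ^ (n - 1) * Real.exp (-(x ^ n * y ^ n)) * f x)
          - ∑ j ∈ Finset.range K, (n * y ^ n) ^ (K - 1 - j) * ((deltaBar n)^[j] f) 0 :=
  Ln_deltaBar_iterate_general k n K hn f α M hα hc hd hord hint
end
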